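/- arXiv:0904.3606 — 2 statements merged into one kernel-verified Lean document; each statement's English description precedes it below -/
import Mathlib

section
/- There is no integral convex polytope P ⊂ ℝ^N (for any N) of dimension 7 whose δ-vector equals (1, 0, 1, 0, 1, 1, 0, 0). In particular, the classification of Theorem 0.1 fails for sequences with Σ_{i=0}^d δ_i = 4: this sequence has δ_0 = 1, δ_1 ≥ δ_7, Σ δ_i = 4 and satisfies all of Stanley's inequalities and the inequalities δ_{d−1} + ⋯ + δ_{d−i} ≤ δ_2 + ⋯ + δ_{i+1}, yet it is not a δ-vector. -/
open Finset MeasureTheory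

/-- A point of `ℝ^N` has integer coordinates. -/
def IsLatticePt {N : ℕ} (x : Fin N → ℝ) : Prop := ∀ j, ∃ z : ℤ, x j = (z : ℝ)

/-- `P ⊂ ℝ^N` is an integral convex polytope of dimension `d`: the convex hull of a
nonempty finite set of lattice points, whose affine hull has dimension `d`. -/
def IsIntegralPolytope (N d : ℕ) (P : Set (Fin N → ℝ)) : Prop :=
  (∃ V : Finset (Fin N → ℝ), V.Nonempty ∧ (∀ v ∈ V, IsLatticePt v) ∧
    P = convexHull ℝ (V : Set (Fin N → ℝ))) ∧
  Module.finrank ℝ (vectorSpan ℝ P) = d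

/-- `i(P, n) = |nP ∩ ℤ^N|`, the number of lattice points in the `n`-th dilate of `P`. -/
noncomputable def ehrhart {N : ℕ} (P : Set (Fin N → ℝ)) (n : ℕ) : ℕ :=
  Set.ncard {x : Fin N → ℝ | x ∈ (fun p => (n : ℝ) • p) '' P ∧ IsLatticePt x}

/-- The `i`-th entry of the δ-vector of a `d`-dimensional polytope `P`, via the
formula `δ_i = Σ_{j=0}^i (−1)^j C(d+1, j) i(P, i−j)`, which is equivalent to the
generating-function definition `(1−λ)^{d+1}(1 + Σ_{n≥1} i(P,n) λ^n) = Σ_i δ_i λ^i`. -/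
noncomputable def deltaVector {N : ℕ} (d : ℕ) (P : Set (Fin N → ℝ)) (i : ℕ) : ℤ :=
  ∑ j ∈ Finset.range (i + 1),
    (-1 : ℤ) ^ j * (Nat.choose (d + 1) j : ℤ) * (ehrhart P (i - j) : ℤ)

/-- Stanley's inequalities: with `s = max{ i : δ_i ≠ 0 }` (computed among indices `≤ d`),
`δ_0 + δ_1 + ⋯ + δ_i ≤ δ_s + δ_{s−1} + ⋯ + δ_{s−i}` for all `0 ≤ i ≤ ⌊s/2⌋`. -/
def StanleyIneq (d : ℕ) (δ : ℕ → ℕ) : Prop :=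
  ∀ i ≤ (Nat.findGreatest (fun k => δ k ≠ 0) d) / 2,
    ∑ j ∈ Finset.range (i + 1), δ j ≤
      ∑ j ∈ Finset.range (i + 1), δ (Nat.findGreatest (fun k => δ k ≠ 0) d - j)

/-- The inequalities `δ_{d−1} + δ_{d−2} + ⋯ + δ_{d−i} ≤ δ_2 + δ_3 + ⋯ + δ_{i+1}`
for all `1 ≤ i ≤ ⌊(d−1)/2⌋`. -/
def HibiIneq (d : ℕ) (δ : ℕ → ℕ) : Prop :=
  ∀ i, 1 ≤ i → i ≤ (d - 1) / 2 →
    ∑ j ∈ Finset.Icc 1 i, δ (d - j) ≤ ∑ j ∈ Finset.Icc 2 (i + 1), δ j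

/-- The sequence `(1, 0, 1, 0, 1, 1, 0, 0)`. -/
def exampleDelta : ℕ → ℕ := fun i => if i = 0 ∨ i = 2 ∨ i = 4 ∨ i = 5 then 1 else 0

/-!
A `d`-polytope with `δ₁ = 0` has `i(P, 1) = d + 1` lattice points, so its vertices are exactly
these points and `P` is a lattice simplex. For a lattice simplex with vertices `v₀, …, v_d`,
every lattice point of `nP` is uniquely `∑ (rᵢ + mᵢ) vᵢ` with `rᵢ ∈ [0, 1)`, `mᵢ ∈ ℕ`, and
`∑ rᵢ vᵢ` a lattice point, so `δ_k` counts the points `r` of height `∑ rᵢ = k`. These points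
form a group under coordinatewise addition modulo `1`, and the negative of a point of height `k`
has height `#supp r - k`. For `δ = (1,0,1,0,1,1,0,0)` the group is `{0, x, y, z}` with heights
`0, 2, 4, 5`: then `-z = x`, so `x` and `z` share a zero coordinate; `-y = y`, so `y ≡ 1/2`;
and `x + y` equals `1/2` at that coordinate, which only `y` allows, forcing `x = 0`.
-/

lemma PowerSeries.coeff_one_sub_X_pow {R : Type*} [CommRing R] (n j : ℕ) :
    coeff j ((1 - X : PowerSeries R) ^ n) = (-1) ^ j * n.choose j := by
  have h : (1 - X : PowerSeries R) =
      rescale (-1) ((1 + Polynomial.X : Polynomial R) : PowerSeries R) := by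
    simp [sub_eq_add_neg]
  rw [h, ← map_pow, coeff_rescale, ← Polynomial.coe_pow, Polynomial.coeff_coe,
    Polynomial.coeff_one_add_X_pow]

namespace LatticeSimplex

variable {N : ℕ}

def latticePoints (N : ℕ) : AddSubgroup (Fin N → ℝ) where
  carrier := {x | IsLatticePt x}
  add_mem' {x y} hx hy j := by
    obtain ⟨a, ha⟩ := hx j
    obtain ⟨b, hb⟩ := hy j
    exact ⟨a + b, by simp [ha, hb]⟩
  zero_mem' _ := ⟨0, by simp⟩
  neg_mem' {x} hx j := by
    obtain ⟨a, ha⟩ := hx j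
    exact ⟨-a, by simp [ha]⟩

lemma mem_latticePoints {x : Fin N → ℝ} : x ∈ latticePoints N ↔ IsLatticePt x := Iff.rfl

lemma isLatticePt_sum_intCast_smul {ι : Type*} [Fintype ι] {v : ι → Fin N → ℝ}
    (hv : ∀ i, IsLatticePt (v i)) (a : ι → ℤ) : IsLatticePt (∑ i, (a i : ℝ) • v i) :=
  (latticePoints N).sum_mem fun i _ => by
    simpa only [Int.cast_smul_eq_zsmul] using (latticePoints N).zsmul_mem (hv i) (a i)

lemma finite_setOf_isLatticePt_of_isBounded {s : Set (Fin N → ℝ)} (hs : Bornology.IsBounded s) :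
    {x | x ∈ s ∧ IsLatticePt x}.Finite := by
  obtain ⟨R, hR⟩ := hs.subset_closedBall 0
  refine (Set.Finite.pi fun _ => (Set.finite_Icc (-⌈R⌉) ⌈R⌉).image ((↑) : ℤ → ℝ)).subset ?_
  rintro x ⟨hxs, hx⟩ j -
  obtain ⟨a, ha⟩ := hx j
  have hxj : |(a : ℝ)| ≤ R := by
    rw [← ha, ← Real.norm_eq_abs]
    exact (norm_le_pi_norm x j).trans (mem_closedBall_zero_iff.1 (hR hxs))
  refine ⟨a, ⟨?_, ?_⟩, ha.symm⟩
  · have : -(a : ℝ) ≤ ⌈R⌉ := (neg_le_abs _).trans (hxj.trans (Int.le_ceil R))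
    exact_mod_cast neg_le.1 this
  · exact_mod_cast (le_abs_self _).trans (hxj.trans (Int.le_ceil R))

lemma mem_convexHull_range_iff {ι E : Type*} [Fintype ι] [AddCommGroup E] [Module ℝ E]
    {v : ι → E} {x : E} :
    x ∈ convexHull ℝ (Set.range v) ↔
      ∃ w : ι → ℝ, (∀ i, 0 ≤ w i) ∧ ∑ i, w i = 1 ∧ ∑ i, w i • v i = x := by
  classical
  refine ⟨fun hx => ?_, fun ⟨w, hw₀, hw₁, hx⟩ =>
    mem_convexHull_of_exists_fintype w v hw₀ hw₁ (Set.mem_range_self ·) hx⟩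
  rw [convexHull_range_eq_exists_affineCombination] at hx
  obtain ⟨s, w, hw₀, hw₁, rfl⟩ := hx
  refine ⟨fun i => if i ∈ s then w i else 0, fun i => ?_, ?_, ?_⟩
  · dsimp only
    split_ifs with hi
    exacts [hw₀ i hi, le_rfl]
  · rwa [sum_ite_mem, univ_inter]
  · rw [affineCombination_eq_linear_combination _ _ _ hw₁]
    simp only [ite_smul, zero_smul, sum_ite_mem, univ_inter]

lemma mem_smul_convexHull_range_iff {ι E : Type*} [Fintype ι] [Nonempty ι] [AddCommGroup E]
    [Module ℝ E] {v : ι → E} {n : ℕ} {x : E} :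
    x ∈ (fun p => (n : ℝ) • p) '' convexHull ℝ (Set.range v) ↔
      ∃ c : ι → ℝ, (∀ i, 0 ≤ c i) ∧ ∑ i, c i = n ∧ ∑ i, c i • v i = x := by
  constructor
  · rintro ⟨p, hp, rfl⟩
    obtain ⟨w, hw₀, hw₁, rfl⟩ := mem_convexHull_range_iff.1 hp
    refine ⟨fun i => n * w i, fun i => mul_nonneg n.cast_nonneg (hw₀ i), ?_, ?_⟩
    · rw [← mul_sum, hw₁, mul_one]
    · simp only [smul_sum, smul_smul]
  rintro ⟨c, hc₀, hc, rfl⟩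
  rcases Nat.eq_zero_or_pos n with rfl | hn
  · have hc0 : c = 0 := funext fun i =>
      (sum_eq_zero_iff_of_nonneg fun i _ => hc₀ i).1 (by simpa using hc) i (mem_univ i)
    obtain ⟨i⟩ := ‹Nonempty ι›
    exact ⟨v i, subset_convexHull ℝ _ ⟨i, rfl⟩, by simp [hc0]⟩
  · have hn' : (n : ℝ) ≠ 0 := by positivity
    refine ⟨_, mem_convexHull_range_iff.2
      ⟨fun i => c i / n, fun i => div_nonneg (hc₀ i) n.cast_nonneg, ?_, rfl⟩, ?_⟩
    · rw [← sum_div, hc, div_self hn']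
    · simp only [smul_sum, smul_smul, mul_div_cancel₀ _ hn']

lemma eq_and_eq_of_add_natCast_eq {r r' : ℝ} {m m' : ℕ} (hr : r ∈ Set.Ico 0 1)
    (hr' : r' ∈ Set.Ico 0 1) (h : r + m = r' + m') : r = r' ∧ m = m' := by
  have hm : m = m' := by
    simpa [Nat.floor_add_natCast hr.1, Nat.floor_add_natCast hr'.1, Nat.floor_eq_zero.2 hr.2,
      Nat.floor_eq_zero.2 hr'.2] using congrArg Nat.floor h
  subst hm
  exact ⟨add_right_cancel h, rfl⟩

lemma fract_neg_fract_neg_of_mem_Ico {a : ℝ} (ha : a ∈ Set.Ico 0 1) :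
    Int.fract (-Int.fract (-a)) = a := by
  rw [Int.fract_eq_iff]
  exact ⟨ha.1, ha.2, ⌊-a⌋, by rw [Int.fract]; ring⟩

lemma add_fract_neg_of_mem_Ico {a : ℝ} (ha : a ∈ Set.Ico 0 1) :
    a + Int.fract (-a) = if a = 0 then 0 else 1 := by
  split_ifs with h
  · simp [h]
  · rw [Int.fract_neg (by rwa [Int.fract_eq_self.2 ha]), Int.fract_eq_self.2 ha]
    ring

lemma eq_zero_of_fract_add_eq {a b : ℝ} (ha : a ∈ Set.Ico 0 1) (hb : b ∈ Set.Ico 0 1)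
    (h : Int.fract (a + b) = b) : a = 0 := by
  obtain ⟨z, hz⟩ := Int.fract_eq_fract.1 (h.trans (Int.fract_eq_self.2 hb).symm)
  rw [add_sub_cancel_right] at hz
  rw [← Int.fract_eq_self.2 ha, hz, Int.fract_intCast]

lemma sum_add_sum_fract_neg {ι : Type*} [Fintype ι] {r : ι → ℝ} (hr : ∀ i, r i ∈ Set.Ico 0 1) :
    ∑ i, r i + ∑ i, Int.fract (-r i) = #{i | r i ≠ 0} := by
  rw [← sum_add_distrib, card_filter, Nat.cast_sum]
  refine sum_congr rfl fun i _ => ?_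
  rw [add_fract_neg_of_mem_Ico (hr i)]
  split_ifs <;> simp_all

lemma ncard_setOf_sum_eq (d j : ℕ) :
    {m : Fin (d + 1) → ℕ | ∑ i, m i = j}.ncard = (d + j).choose d := by
  rw [← Nat.card_coe_set_eq, Set.coe_ofPred,
    Nat.card_congr (Sym.equivNatSumOfFintype (Fin (d + 1)) j).symm, Nat.card_eq_fintype_card,
    Sym.card_sym_eq_choose, Fintype.card_fin, Nat.add_right_comm, Nat.add_sub_cancel,
    Nat.choose_symm_add]

section Box

variable {ι : Type*} [Fintype ι] {v : ι → Fin N → ℝ}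

/-- The lattice points `∑ rᵢ (vᵢ, 1)` with all `rᵢ ∈ [0, 1)` of the cone over the simplex with
vertices `v`, at height `k`, recorded by their coordinates `r`. -/
def box (v : ι → Fin N → ℝ) (k : ℕ) : Set (ι → ℝ) :=
  {r | (∀ i, r i ∈ Set.Ico 0 1) ∧ IsLatticePt (∑ i, r i • v i) ∧ ∑ i, r i = k}

lemma eq_of_mem_box_of_mem_box {r : ι → ℝ} {k l : ℕ} (hk : r ∈ box v k) (hl : r ∈ box v l) :
    k = l := by
  exact_mod_cast hk.2.2.symm.trans hl.2.2

lemma eq_zero_of_mem_box_zero {r : ι → ℝ} (hr : r ∈ box v 0) : r = 0 :=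
  funext fun i => (sum_eq_zero_iff_of_nonneg fun i _ => (hr.1 i).1).1
    (by rw [hr.2.2, Nat.cast_zero]) i (mem_univ i)

lemma ne_zero_of_mem_box {r : ι → ℝ} {k : ℕ} (hr : r ∈ box v k) (hk : k ≠ 0) : r ≠ 0 := by
  rintro rfl
  exact hk (by simpa [eq_comm] using hr.2.2)

lemma lt_card_of_mem_box [Nonempty ι] {r : ι → ℝ} {k : ℕ} (hr : r ∈ box v k) :
    k < Fintype.card ι := by
  have := sum_lt_sum_of_nonempty univ_nonempty fun i (_ : i ∈ univ) => (hr.1 i).2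
  rw [hr.2.2, sum_const, card_univ, nsmul_one] at this
  exact_mod_cast this

lemma finite_box (hai : AffineIndependent ℝ v) (k : ℕ) : (box v k).Finite := by
  have hK : IsCompact ((fun r : ι → ℝ => ∑ i, r i • v i) '' Set.univ.pi fun _ => Set.Icc 0 1) :=
    (isCompact_univ_pi fun _ => isCompact_Icc).image (by fun_prop)
  refine .of_injOn (f := fun r => ∑ i, r i • v i) (fun r hr => ?_) ?_
    (finite_setOf_isLatticePt_of_isBounded hK.isBounded)
  · exact ⟨⟨r, fun i _ => Set.Ico_subset_Icc_self (hr.1 i), rfl⟩, hr.2.1⟩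
  · intro r hr r' hr' h
    funext i
    exact hai.eq_of_sum_eq_sum (by rw [hr.2.2, hr'.2.2]) h i (mem_univ i)

lemma exists_fract_mem_box (hv : ∀ i, IsLatticePt (v i)) {c : ι → ℝ}
    (hc : IsLatticePt (∑ i, c i • v i)) {z : ℤ} (hz : ∑ i, c i = z) :
    ∃ k : ℕ, (fun i => Int.fract (c i)) ∈ box v k := by
  have hlat : IsLatticePt (∑ i, Int.fract (c i) • v i) := by
    have := (latticePoints N).sub_mem hc (isLatticePt_sum_intCast_smul hv fun i => ⌊c i⌋)
    simpa only [Int.fract, sub_smul, sum_sub_distrib, mem_latticePoints] using this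
  have hsum : ∑ i, Int.fract (c i) = ((z - ∑ i, ⌊c i⌋ : ℤ) : ℝ) := by
    simp only [Int.fract, sum_sub_distrib, hz]
    push_cast
    ring
  have hnn : 0 ≤ z - ∑ i, ⌊c i⌋ := by
    have : (0 : ℝ) ≤ ∑ i, Int.fract (c i) := sum_nonneg fun i _ => Int.fract_nonneg _
    exact_mod_cast hsum ▸ this
  refine ⟨(z - ∑ i, ⌊c i⌋).toNat, fun i => ⟨Int.fract_nonneg _, Int.fract_lt_one _⟩, hlat, ?_⟩
  rw [hsum]
  exact_mod_cast (Int.toNat_of_nonneg hnn).symm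

lemma exists_fract_neg_mem_box (hv : ∀ i, IsLatticePt (v i)) {r : ι → ℝ} {k : ℕ}
    (hr : r ∈ box v k) : ∃ l : ℕ, (fun i => Int.fract (-r i)) ∈ box v l :=
  exists_fract_mem_box hv (z := -k)
    (by simpa only [neg_smul, sum_neg_distrib, mem_latticePoints] using
      (latticePoints N).neg_mem hr.2.1)
    (by rw [sum_neg_distrib, hr.2.2]; push_cast; rfl)

lemma exists_fract_add_mem_box (hv : ∀ i, IsLatticePt (v i)) {r s : ι → ℝ} {k l : ℕ}
    (hr : r ∈ box v k) (hs : s ∈ box v l) :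
    ∃ m : ℕ, (fun i => Int.fract (r i + s i)) ∈ box v m :=
  exists_fract_mem_box hv (z := k + l)
    (by simpa only [add_smul, sum_add_distrib, mem_latticePoints] using
      (latticePoints N).add_mem hr.2.1 hs.2.1)
    (by rw [sum_add_distrib, hr.2.2, hs.2.2]; push_cast; rfl)

lemma add_eq_card_of_fract_neg_mem_box {r : ι → ℝ} {k l : ℕ} (hr : r ∈ box v k)
    (hl : (fun i => Int.fract (-r i)) ∈ box v l) : k + l = #{i | r i ≠ 0} := by
  have := sum_add_sum_fract_neg hr.1
  rw [hr.2.2, hl.2.2] at this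
  exact_mod_cast this

lemma setOf_mem_smul_convexHull_isLatticePt_eq [Nonempty ι] (hv : ∀ i, IsLatticePt (v i))
    (n : ℕ) :
    {x | x ∈ (fun p => (n : ℝ) • p) '' convexHull ℝ (Set.range v) ∧ IsLatticePt x} =
      (fun q : (ι → ℝ) × (ι → ℕ) => ∑ i, (q.1 i + q.2 i) • v i) ''
        ⋃ p ∈ (antidiagonal n : Set (ℕ × ℕ)), box v p.1 ×ˢ {m | ∑ i, m i = p.2} := by
  ext x
  rw [Set.mem_ofPred_eq, mem_smul_convexHull_range_iff]
  simp only [Set.mem_image, Set.mem_iUnion, Set.mem_prod, Prod.exists, mem_coe,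
    HasAntidiagonal.mem_antidiagonal]
  constructor
  · rintro ⟨⟨c, hc₀, hc, rfl⟩, hx⟩
    set m : ι → ℕ := fun i => ⌊c i⌋₊
    have hm : ∀ i, (m i : ℝ) ≤ c i := fun i => Nat.floor_le (hc₀ i)
    have hmn : ∑ i, m i ≤ n := by
      have : ((∑ i, m i : ℕ) : ℝ) ≤ n := by
        rw [Nat.cast_sum, ← hc]
        exact sum_le_sum fun i _ => hm i
      exact_mod_cast this
    refine ⟨fun i => c i - m i, m, ⟨n - ∑ i, m i, ∑ i, m i, Nat.sub_add_cancel hmn,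
      ⟨fun i => ⟨sub_nonneg.2 (hm i), by linarith [Nat.lt_floor_add_one (c i)]⟩, ?_, ?_⟩, rfl⟩,
      by simp only [sub_add_cancel]⟩
    · have h := (latticePoints N).sub_mem hx (isLatticePt_sum_intCast_smul hv fun i => m i)
      simpa only [sub_smul, sum_sub_distrib, Int.cast_natCast, mem_latticePoints] using h
    · rw [Nat.cast_sub hmn, ← hc, Nat.cast_sum, ← sum_sub_distrib]
  · rintro ⟨r, m, ⟨k, j, hkj, hr, hm⟩, rfl⟩
    refine ⟨⟨fun i => r i + m i, fun i => add_nonneg (hr.1 i).1 (m i).cast_nonneg, ?_, rfl⟩, ?_⟩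
    · rw [sum_add_distrib, hr.2.2, ← Nat.cast_sum, hm, ← Nat.cast_add, hkj]
    · have h := (latticePoints N).add_mem hr.2.1 (isLatticePt_sum_intCast_smul hv fun i => m i)
      simpa only [add_smul, sum_add_distrib, Int.cast_natCast, mem_latticePoints] using h

lemma injOn_sum_add_natCast_smul (hai : AffineIndependent ℝ v) (n : ℕ) :
    Set.InjOn (fun q : (ι → ℝ) × (ι → ℕ) => ∑ i, (q.1 i + q.2 i) • v i)
      (⋃ p ∈ (antidiagonal n : Set (ℕ × ℕ)), box v p.1 ×ˢ {m | ∑ i, m i = p.2}) := by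
  rintro ⟨r, m⟩ hq ⟨r', m'⟩ hq' h
  simp only [Set.mem_iUnion, Set.mem_prod, mem_coe, HasAntidiagonal.mem_antidiagonal,
    Set.mem_ofPred_eq, exists_prop, Prod.exists] at hq hq'
  obtain ⟨k, j, hkj, hr, hm⟩ := hq
  obtain ⟨k', j', hkj', hr', hm'⟩ := hq'
  have hc := hai.eq_of_sum_eq_sum (w₁ := fun i => r i + m i) (w₂ := fun i => r' i + m' i) (by
    rw [sum_add_distrib, sum_add_distrib, hr.2.2, hr'.2.2, ← Nat.cast_sum, ← Nat.cast_sum, hm, hm']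
    exact_mod_cast hkj.trans hkj'.symm) h
  have hrm i := eq_and_eq_of_add_natCast_eq (hr.1 i) (hr'.1 i) (hc i (mem_univ i))
  exact Prod.ext (funext fun i => (hrm i).1) (funext fun i => (hrm i).2)

end Box

theorem ehrhart_convexHull_eq_sum_antidiagonal {d : ℕ} {v : Fin (d + 1) → Fin N → ℝ}
    (hv : ∀ i, IsLatticePt (v i)) (hai : AffineIndependent ℝ v) (n : ℕ) :
    ehrhart (convexHull ℝ (Set.range v)) n =
      ∑ p ∈ antidiagonal n, (box v p.1).ncard * (d + p.2).choose d := by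
  rw [ehrhart, setOf_mem_smul_convexHull_isLatticePt_eq hv,
    (injOn_sum_add_natCast_smul hai n).ncard_image,
    Set.Finite.ncard_biUnion (finite_toSet _) (fun p _ => (finite_box hai _).prod ?_) ?_,
    finsum_mem_coe_finset]
  · exact sum_congr rfl fun p _ => by rw [Set.ncard_prod, ncard_setOf_sum_eq]
  · intro p hp p' hp' hne
    refine Set.disjoint_left.2 fun q hq hq' => hne ?_
    have hk : p.1 = p'.1 := eq_of_mem_box_of_mem_box hq.1 hq'.1
    rw [mem_coe, HasAntidiagonal.mem_antidiagonal] at hp hp'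
    exact Prod.ext hk (by omega)
  · exact Set.finite_of_ncard_pos (by rw [ncard_setOf_sum_eq]; exact Nat.choose_pos (by omega))

open PowerSeries in
/-- `∑ₙ i(P, n) λⁿ = (∑ₖ #box_k λᵏ) / (1 - λ)^(d+1)`, so `δ` is the sequence of box counts. -/
theorem deltaVector_convexHull_eq_ncard_box {d : ℕ} {v : Fin (d + 1) → Fin N → ℝ}
    (hv : ∀ i, IsLatticePt (v i)) (hai : AffineIndependent ℝ v) (i : ℕ) :
    deltaVector d (convexHull ℝ (Set.range v)) i = (box v i).ncard := by
  set B : ℤ⟦X⟧ := mk fun k => ((box v k).ncard : ℤ)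
  set E : ℤ⟦X⟧ := mk fun n => (ehrhart (convexHull ℝ (Set.range v)) n : ℤ)
  have hE : E = B * mk fun n => ((d + n).choose d : ℤ) := by
    ext n
    simp only [E, B, coeff_mk, coeff_mul, ehrhart_convexHull_eq_sum_antidiagonal hv hai]
    push_cast
    rfl
  have hδ : deltaVector d (convexHull ℝ (Set.range v)) i = coeff i ((1 - X) ^ (d + 1) * E) := by
    rw [coeff_mul, Nat.sum_antidiagonal_eq_sum_range_succ
      (fun a b => coeff a ((1 - X : ℤ⟦X⟧) ^ (d + 1)) * coeff b E), deltaVector]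
    exact sum_congr rfl fun j _ => by rw [coeff_one_sub_X_pow, coeff_mk]
  rw [hδ, hE, mul_left_comm, mul_comm ((1 - X : ℤ⟦X⟧) ^ (d + 1)),
    mk_add_choose_mul_one_sub_pow_eq_one, mul_one, coeff_mk]

lemma ehrhart_one_eq_of_deltaVector {d : ℕ} {P : Set (Fin N → ℝ)} (h0 : deltaVector d P 0 = 1)
    (h1 : deltaVector d P 1 = 0) : ehrhart P 1 = d + 1 := by
  have e0 : (ehrhart P 0 : ℤ) = 1 := by simpa [deltaVector] using h0
  have e1 : (ehrhart P 1 : ℤ) - (d + 1) * ehrhart P 0 = 0 := by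
    rw [← h1, deltaVector, sum_range_succ, sum_range_one]
    simp only [pow_zero, pow_one, Nat.choose_zero_right, Nat.choose_one_right, Nat.sub_zero,
      Nat.sub_self]
    push_cast
    ring
  zify
  linear_combination e1 + (d + 1) * e0

theorem exists_simplex_of_ehrhart_one {d : ℕ} {P : Set (Fin N → ℝ)}
    (hP : IsIntegralPolytope N d P) (h1 : ehrhart P 1 = d + 1) :
    ∃ v : Fin (d + 1) → Fin N → ℝ, (∀ i, IsLatticePt (v i)) ∧ AffineIndependent ℝ v ∧
      P = convexHull ℝ (Set.range v) := by
  obtain ⟨⟨V, hVne, hVlat, rfl⟩, hrank⟩ := hP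
  rw [← direction_affineSpan, affineSpan_convexHull, direction_affineSpan] at hrank
  have hpos := hVne.card_pos
  have hle : V.card ≤ d + 1 := by
    rw [← h1, ← Set.ncard_coe_finset]
    refine Set.ncard_le_ncard (fun x hx => ⟨⟨x, subset_convexHull ℝ _ hx, by simp⟩, hVlat x hx⟩)
      (Set.finite_of_ncard_pos (by rw [← ehrhart, h1]; omega))
  have hge : d ≤ V.card - 1 := by
    rw [← hrank, ← Subtype.range_coe (s := (V : Set (Fin N → ℝ)))]
    exact finrank_vectorSpan_range_le ℝ _ (by simp only [SetLike.mem_coe, Fintype.card_coe]; omega)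
  set e := V.equivFinOfCardEq (by omega : V.card = d + 1)
  have hrange : Set.range (fun i => (e.symm i : Fin N → ℝ)) = V := by
    rw [← Subtype.range_coe (s := (V : Set (Fin N → ℝ)))]
    exact e.symm.surjective.range_comp Subtype.val
  refine ⟨fun i => e.symm i, fun i => hVlat _ (e.symm i).2, ?_, by rw [hrange]⟩
  rwa [affineIndependent_iff_finrank_vectorSpan_eq ℝ _ (Fintype.card_fin _), hrange]

theorem false_of_forall_mem_box {v : Fin 8 → Fin N → ℝ} (hv : ∀ i, IsLatticePt (v i))
    {x y z : Fin 8 → ℝ} (hx : x ∈ box v 2) (hy : y ∈ box v 4) (hz : z ∈ box v 5)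
    (hbox : ∀ k, ∀ r ∈ box v k, r = 0 ∨ r = x ∨ r = y ∨ r = z) : False := by
  have neg_neg {k : ℕ} {r : Fin 8 → ℝ} (hr : r ∈ box v k) (i : Fin 8) :
      Int.fract (-Int.fract (-r i)) = r i :=
    fract_neg_fract_neg_of_mem_Ico (hr.1 i)
  -- `-z` has height `#supp z - 5 ≤ 3`, so it is `x`, and `#supp z = 7`
  obtain ⟨l, hl⟩ := exists_fract_neg_mem_box hv hz
  have hsupp := add_eq_card_of_fract_neg_mem_box hz hl
  have hzx : (fun i => Int.fract (-z i)) = x := by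
    have : #{i | z i ≠ 0} ≤ 8 := card_filter_le _ _
    rcases hbox l _ hl with h | h | h | h
    · exact absurd (funext fun i => by rw [← neg_neg hz i, congrFun h i]; simp)
        (ne_zero_of_mem_box hz (by norm_num))
    · exact h
    · have := eq_of_mem_box_of_mem_box (h ▸ hl) hy
      omega
    · have := eq_of_mem_box_of_mem_box (h ▸ hl) hz
      omega
  obtain ⟨i₀, hz₀⟩ : ∃ i, z i = 0 := by
    rw [eq_of_mem_box_of_mem_box (hzx ▸ hl : x ∈ box v l) hx] at hsupp
    by_contra! hne
    have := card_filter_eq_iff.2 fun i (_ : i ∈ univ) => hne i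
    simp only [card_univ, Fintype.card_fin] at this
    omega
  have hx₀ : x i₀ = 0 := by simp [← hzx, hz₀]
  -- `-y` has height `#supp y - 4 ≤ 4` and is not `-z = x`, so `-y = y` and `y ≡ 1/2`
  obtain ⟨l', hl'⟩ := exists_fract_neg_mem_box hv hy
  have hsupp' := add_eq_card_of_fract_neg_mem_box hy hl'
  have hyy : (fun i => Int.fract (-y i)) = y := by
    have : #{i | y i ≠ 0} ≤ 8 := card_filter_le _ _
    rcases hbox l' _ hl' with h | h | h | h
    · exact absurd (funext fun i => by rw [← neg_neg hy i, congrFun h i]; simp)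
        (ne_zero_of_mem_box hy (by norm_num))
    · have hyz : y = z := funext fun i => by
        rw [← neg_neg hy i, congrFun h i, ← congrFun hzx i, neg_neg hz i]
      have := eq_of_mem_box_of_mem_box hy (hyz ▸ hz)
      omega
    · exact h
    · have := eq_of_mem_box_of_mem_box (h ▸ hl') hz
      omega
  have hy₀ : y i₀ = 1 / 2 := by
    rw [eq_of_mem_box_of_mem_box (hyy ▸ hl' : y ∈ box v l') hy] at hsupp'
    have hne : y i₀ ≠ 0 := card_filter_eq_iff.1 (by simpa using hsupp'.symm) i₀ (mem_univ _)
    have := add_fract_neg_of_mem_Ico (hy.1 i₀)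
    rw [if_neg hne, congrFun hyy i₀] at this
    linarith
  -- `x + y` is `1/2` at `i₀`, where `0`, `x` and `z` vanish, so `x + y = y`, forcing `x = 0`
  obtain ⟨m, hm⟩ := exists_fract_add_mem_box hv hx hy
  have hm₀ : Int.fract (x i₀ + y i₀) = 1 / 2 := by
    rw [hx₀, hy₀, zero_add, Int.fract_eq_self]
    norm_num
  rcases hbox m _ hm with h | h | h | h
  · have := congrFun h i₀
    rw [hm₀] at this
    norm_num at this
  · have := congrFun h i₀
    rw [hm₀, hx₀] at this
    norm_num at this
  · exact ne_zero_of_mem_box hx (by norm_num)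
      (funext fun i => eq_zero_of_fract_add_eq (hx.1 i) (hy.1 i) (congrFun h i))
  · have := congrFun h i₀
    rw [hm₀, hz₀] at this
    norm_num at this

theorem not_forall_ncard_box_eq_exampleDelta {v : Fin 8 → Fin N → ℝ}
    (hv : ∀ i, IsLatticePt (v i)) (hai : AffineIndependent ℝ v) :
    ¬ ∀ k ≤ 7, (box v k).ncard = exampleDelta k := by
  intro h
  obtain ⟨x, hx⟩ := Set.ncard_eq_one.1 (h 2 (by norm_num))
  obtain ⟨y, hy⟩ := Set.ncard_eq_one.1 (h 4 (by norm_num))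
  obtain ⟨z, hz⟩ := Set.ncard_eq_one.1 (h 5 (by norm_num))
  have empty k (hk : k ≤ 7) (h0 : exampleDelta k = 0) : box v k = ∅ :=
    (Set.ncard_eq_zero (finite_box hai k)).1 ((h k hk).trans h0)
  refine false_of_forall_mem_box hv (hx.symm.subset rfl) (hy.symm.subset rfl)
    (hz.symm.subset rfl) fun k r hr => ?_
  have hk : k < 8 := lt_card_of_mem_box hr
  interval_cases k
  · exact .inl (eq_zero_of_mem_box_zero hr)
  · simp [empty 1 (by norm_num) rfl] at hr
  · exact .inr (.inl (hx.subset hr))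
  · simp [empty 3 (by norm_num) rfl] at hr
  · exact .inr (.inr (.inl (hy.subset hr)))
  · exact .inr (.inr (.inr (hz.subset hr)))
  · simp [empty 6 (by norm_num) rfl] at hr
  · simp [empty 7 (by norm_num) rfl] at hr

end LatticeSimplex

open LatticeSimplex

/-- The sequence `(1,0,1,0,1,1,0,0)` has `δ_0 = 1`, `δ_1 ≥ δ_7`, `Σ δ_i = 4`, and
satisfies all of Stanley's inequalities and the inequalities (1.3) for `d = 7`,
yet it is not the δ-vector of any integral convex polytope `P ⊂ ℝ^N` of dimension `7`:
the classification of Theorem 0.1 fails when `Σ δ_i = 4`. -/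
theorem not_delta_vector_example :
    (exampleDelta 0 = 1 ∧ exampleDelta 7 ≤ exampleDelta 1 ∧
      (∑ i ∈ Finset.range 8, exampleDelta i) = 4 ∧
      StanleyIneq 7 exampleDelta ∧ HibiIneq 7 exampleDelta) ∧
    ¬ ∃ (N : ℕ) (P : Set (Fin N → ℝ)), IsIntegralPolytope N 7 P ∧
        ∀ i ≤ 7, deltaVector 7 P i = (exampleDelta i : ℤ) := by
  refine ⟨⟨by decide, by decide, by decide, by unfold StanleyIneq; decide,
    by unfold HibiIneq; decide⟩, ?_⟩
  rintro ⟨N, P, hP, hδ⟩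
  obtain ⟨v, hv, hai, rfl⟩ := exists_simplex_of_ehrhart_one hP
    (ehrhart_one_eq_of_deltaVector (hδ 0 (by norm_num)) (hδ 1 (by norm_num)))
  exact not_forall_ncard_box_eq_exampleDelta hv hai fun k hk => by
    exact_mod_cast (deltaVector_convexHull_eq_ncard_box hv hai k).symm.trans (hδ k hk)
end

section
/- Let d ≥ 3 and let (δ_0, δ_1, …, δ_d) be a sequence with every δ_i ∈ {0, 1}, δ_0 = 1, δ_1 ≥ δ_d, and Σ_{i=0}^d δ_i = 3. Then (δ_0, …, δ_d) satisfies all of Stanley's inequalities δ_0 + ⋯ + δ_i ≤ δ_s + ⋯ + δ_{s−i} for 0 ≤ i ≤ ⌊s/2⌋ (s = max{ i : δ_i ≠ 0 }) and all of the inequalities δ_{d−1} + ⋯ + δ_{d−i} ≤ δ_2 + ⋯ + δ_{i+1} for 1 ≤ i ≤ ⌊(d−1)/2⌋, if and only if either (δ_0, …, δ_d) = (1, 1, 1, 0, …, 0), or there exist integers m, n with 1 < m < n < d, δ_m = δ_n = 1, δ_j = 0 for j ∉ {0, m, n}, and, setting p = m − 1, q = n − m − 1, r = d − n, one has 0 ≤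 q ≤ p ≤ r. -/
open Finset

/-!
On `[0, d]` a `0/1` sequence with `δ_0 = 1` and sum `3` is the indicator function of a set
`{0, m, n}` with `0 < m < n ≤ d`, so every partial sum in either family of inequalities counts
the points of `{0, m, n}` in an interval. For `m = 1`, Stanley's inequality at `i = 1` forces
`n = 2`. For `m ≥ 2`, `δ_1 ≥ δ_d` forces `n < d`; Stanley's inequality at `i = m` is then
`q ≤ p` (that is, `n ≤ 2m`) and the second family at `i = r = d - n` gives `p ≤ r` (that is,
`m + n ≤ d + 1`), and conversely these two conditions give every inequality of both families.
-/

theorem Finset.exists_lt_and_eq_pair_of_card_eq_two {α : Type*} [LinearOrder α] {s : Finset α}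
    (hs : #s = 2) : ∃ x y, x < y ∧ s = {x, y} := by
  obtain ⟨x, y, hxy, rfl⟩ := card_eq_two.mp hs
  rcases hxy.lt_or_gt with h | h
  · exact ⟨x, y, h, rfl⟩
  · exact ⟨y, x, h, pair_comm x y⟩

theorem Finset.sum_eq_card_filter_eq_one {ι : Type*} {s : Finset ι} {f : ι → ℕ}
    (hf : ∀ i ∈ s, f i ≤ 1) : ∑ i ∈ s, f i = #{i ∈ s | f i = 1} := by
  rw [card_filter]
  exact sum_congr rfl fun i hi => by have := hf i hi; split_ifs <;> omega

theorem Finset.sum_range_succ_reflect {M : Type*} [AddCommMonoid M] (f : ℕ → M)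
    {n i : ℕ} (hi : i ≤ n) :
    ∑ j ∈ range (i + 1), f (n - j) = ∑ j ∈ Icc (n - i) n, f j := by
  rw [range_eq_Ico, sum_Ico_reflect f 0 (by omega), Nat.sub_zero, Ico_add_one_right_eq_Icc,
    Nat.add_sub_add_right]

theorem Finset.sum_Icc_one_reflect {M : Type*} [AddCommMonoid M] (f : ℕ → M)
    {d i : ℕ} (hi : i ≤ d) :
    ∑ j ∈ Icc 1 i, f (d - j) = ∑ j ∈ Ico (d - i) d, f j := by
  rw [← Ico_add_one_right_eq_Icc, sum_Ico_reflect f 1 (by omega), Nat.add_sub_add_right,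
    Nat.add_sub_cancel]

theorem exists_eq_indicator_of_sum_eq_three {d : ℕ} {δ : ℕ → ℕ} (h01 : ∀ i ≤ d, δ i ≤ 1)
    (h0 : δ 0 = 1) (hsum : ∑ i ∈ range (d + 1), δ i = 3) :
    ∃ m n, 0 < m ∧ m < n ∧ n ≤ d ∧ ∀ j ≤ d, δ j = if j = 0 ∨ j = m ∨ j = n then 1 else 0 := by
  set S := {i ∈ range (d + 1) | δ i = 1}
  have hS : ∀ j, j ∈ S ↔ j ≤ d ∧ δ j = 1 := by simp [S]
  have h0S : 0 ∈ S := (hS 0).2 ⟨Nat.zero_le d, h0⟩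
  have hcard : #(S.erase 0) = 2 := by
    rw [card_erase_of_mem h0S, ← sum_eq_card_filter_eq_one fun i hi =>
      h01 i (Nat.lt_succ_iff.mp (mem_range.mp hi)), hsum]
  obtain ⟨m, n, hmn, hpair⟩ := exists_lt_and_eq_pair_of_card_eq_two hcard
  have hmemS : ∀ j, j ∈ S ↔ j = 0 ∨ j = m ∨ j = n := fun j => by
    rw [← insert_erase h0S, hpair]
    simp only [mem_insert, mem_singleton]
  have hm := mem_erase.mp (hpair ▸ mem_insert_self m {n})
  have hn := (hS n).mp ((hmemS n).mpr (by simp))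
  refine ⟨m, n, Nat.pos_of_ne_zero hm.1, hmn, hn.1, fun j hj => ?_⟩
  split_ifs with h
  · exact ((hS j).mp ((hmemS j).mpr h)).2
  · have : δ j ≠ 1 := fun h' => h ((hmemS j).mp ((hS j).mpr ⟨hj, h'⟩))
    have := h01 j hj
    omega

section Indicator

variable {d m n : ℕ} {δ : ℕ → ℕ}

theorem sum_eq_of_eq_indicator (hδ : ∀ j ≤ d, δ j = if j = 0 ∨ j = m ∨ j = n then 1 else 0)
    (hm : 0 < m) (hmn : m < n) {s : Finset ℕ} (hs : ∀ j ∈ s, j ≤ d) :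
    ∑ j ∈ s, δ j =
      (if 0 ∈ s then 1 else 0) + (if m ∈ s then 1 else 0) + (if n ∈ s then 1 else 0) := by
  have hsplit : ∀ j ∈ s, δ j =
      (if 0 = j then 1 else 0) + (if m = j then 1 else 0) + (if n = j then 1 else 0) := by
    intro j hj
    rw [hδ j (hs j hj)]
    split_ifs <;> omega
  rw [sum_congr rfl hsplit, sum_add_distrib, sum_add_distrib, sum_ite_eq, sum_ite_eq, sum_ite_eq]

theorem findGreatest_ne_zero_of_eq_indicator
    (hδ : ∀ j ≤ d, δ j = if j = 0 ∨ j = m ∨ j = n then 1 else 0) (hmn : m < n) (hn : n ≤ d) :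
    Nat.findGreatest (fun k => δ k ≠ 0) d = n := by
  rw [Nat.findGreatest_eq_iff]
  refine ⟨hn, fun _ => by simp [hδ n hn], fun k hnk hkd => ?_⟩
  simp only [hδ k hkd, ne_eq, ite_eq_right_iff, one_ne_zero, imp_false, not_not]
  omega

theorem stanleyIneq_iff_of_eq_indicator
    (hδ : ∀ j ≤ d, δ j = if j = 0 ∨ j = m ∨ j = n then 1 else 0)
    (hm : 0 < m) (hmn : m < n) (hn : n ≤ d) : StanleyIneq d δ ↔ n ≤ 2 * m := by
  have hineq : ∀ i ≤ n / 2, (∑ j ∈ range (i + 1), δ j ≤ ∑ j ∈ range (i + 1), δ (n - j) ↔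
      (m ≤ i → n - m ≤ i)) := by
    intro i hi
    rw [sum_range_succ_reflect δ (by omega), sum_eq_of_eq_indicator hδ hm hmn (by simp; omega),
      sum_eq_of_eq_indicator hδ hm hmn (by simp; omega)]
    simp only [mem_range, mem_Icc]
    split_ifs <;> omega
  unfold StanleyIneq
  rw [findGreatest_ne_zero_of_eq_indicator hδ hmn hn]
  constructor
  · intro h
    by_contra! hlt
    have := (hineq m (by omega)).mp (h m (by omega))
    omega
  · exact fun h i hi => (hineq i hi).mpr (by omega)

theorem hibiIneq_iff_of_eq_indicator
    (hδ : ∀ j ≤ d, δ j = if j = 0 ∨ j = m ∨ j = n then 1 else 0)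
    (hm : 1 < m) (hmn : m < n) (hn : n < d) : HibiIneq d δ ↔ m + n ≤ d + 1 := by
  have hsums : ∀ i, 1 ≤ i → i ≤ (d - 1) / 2 →
      (∑ j ∈ Icc 1 i, δ (d - j) ≤ ∑ j ∈ Icc 2 (i + 1), δ j ↔
        (if d - i ≤ m then 1 else 0) + (if d - i ≤ n then 1 else 0) ≤
          (if m ≤ i + 1 then 1 else 0) + (if n ≤ i + 1 then 1 else 0)) := by
    intro i hi hid
    rw [sum_Icc_one_reflect δ (by omega), sum_eq_of_eq_indicator hδ (by omega) hmn (by simp; omega),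
      sum_eq_of_eq_indicator hδ (by omega) hmn (by simp; omega)]
    simp only [mem_Ico, mem_Icc]
    split_ifs <;> omega
  constructor
  · intro h
    by_contra! hlt
    have := (hsums (d - n) (by omega) (by omega)).mp (h (d - n) (by omega) (by omega))
    split_ifs at this <;> omega
  · intro h i hi hid
    rw [hsums i hi hid]
    split_ifs <;> omega

theorem hibiIneq_of_eq_indicator_one_two
    (hδ : ∀ j ≤ d, δ j = if j = 0 ∨ j = 1 ∨ j = 2 then 1 else 0) (hd : 2 ≤ d) : HibiIneq d δ := by
  intro i hi hid
  rw [sum_Icc_one_reflect δ (by omega), sum_eq_of_eq_indicator hδ one_pos one_lt_two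
    (by simp; omega), sum_eq_of_eq_indicator hδ one_pos one_lt_two (by simp; omega)]
  simp only [mem_Ico, mem_Icc]
  split_ifs <;> omega

theorem stanleyIneq_and_hibiIneq_iff_of_eq_indicator
    (hδ : ∀ j ≤ d, δ j = if j = 0 ∨ j = m ∨ j = n then 1 else 0)
    (hm : 0 < m) (hmn : m < n) (hn : n ≤ d) (hnd : n = d → m = 1) :
    StanleyIneq d δ ∧ HibiIneq d δ ↔
      m = 1 ∧ n = 2 ∨ 1 < m ∧ n < d ∧ n ≤ 2 * m ∧ m + n ≤ d + 1 := by
  rw [stanleyIneq_iff_of_eq_indicator hδ hm hmn hn]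
  obtain rfl | hm1 : m = 1 ∨ 1 < m := by omega
  · constructor
    · rintro ⟨h, -⟩
      omega
    · rintro (⟨-, rfl⟩ | h)
      · exact ⟨le_rfl, hibiIneq_of_eq_indicator_one_two hδ hn⟩
      · omega
  · rw [hibiIneq_iff_of_eq_indicator hδ hm1 hmn (by omega)]
    omega

theorem support_pattern_iff_of_eq_indicator
    (hδ : ∀ j ≤ d, δ j = if j = 0 ∨ j = m ∨ j = n then 1 else 0)
    (hm : 0 < m) (hmn : m < n) (hn : n ≤ d) :
    ((δ 1 = 1 ∧ δ 2 = 1 ∧ ∀ j ≤ d, j ≠ 0 → j ≠ 1 → j ≠ 2 → δ j = 0) ∨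
        ∃ m' n' : ℕ, 1 < m' ∧ m' < n' ∧ n' < d ∧ δ m' = 1 ∧ δ n' = 1 ∧
          (∀ j ≤ d, j ≠ 0 → j ≠ m' → j ≠ n' → δ j = 0) ∧
          n' - m' - 1 ≤ m' - 1 ∧ m' - 1 ≤ d - n') ↔
      m = 1 ∧ n = 2 ∨ 1 < m ∧ n < d ∧ n ≤ 2 * m ∧ m + n ≤ d + 1 := by
  have hone : ∀ j ≤ d, δ j = 1 ↔ j = 0 ∨ j = m ∨ j = n := fun j hj => by
    rw [hδ j hj]
    split_ifs <;> simp_all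
  have hzero : ∀ j ≤ d, j ≠ 0 → j ≠ m → j ≠ n → δ j = 0 := fun j hj h0 hjm hjn => by
    rw [hδ j hj, if_neg (by omega)]
  constructor
  · rintro (⟨h1, h2, -⟩ | ⟨m', n', hm', hmn', hn', hδm', hδn', -, hq, hp⟩)
    · have := (hone 1 (by omega)).mp h1
      have := (hone 2 (by omega)).mp h2
      omega
    · have := (hone m' (by omega)).mp hδm'
      have := (hone n' (by omega)).mp hδn'
      omega
  · rintro (⟨rfl, rfl⟩ | ⟨hm1, hnd, hq, hp⟩)
    · exact .inl ⟨(hone 1 (by omega)).mpr (by omega), (hone 2 hn).mpr (by omega), hzero⟩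
    · exact .inr ⟨m, n, hm1, hmn, hnd, (hone m (by omega)).mpr (by omega),
        (hone n hn).mpr (by omega), hzero, by omega, by omega⟩

end Indicator

theorem zero_one_delta_sum_three_ineq_iff_general
    (d : ℕ) (δ : ℕ → ℕ)
    (h01 : ∀ i ≤ d, δ i ≤ 1)
    (h0 : δ 0 = 1) (h1 : δ d ≤ δ 1)
    (hsum : ∑ i ∈ Finset.range (d + 1), δ i = 3) :
    (StanleyIneq d δ ∧ HibiIneq d δ) ↔
      ((δ 1 = 1 ∧ δ 2 = 1 ∧ ∀ j ≤ d, j ≠ 0 → j ≠ 1 → j ≠ 2 → δ j = 0) ∨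
        ∃ m n : ℕ, 1 < m ∧ m < n ∧ n < d ∧ δ m = 1 ∧ δ n = 1 ∧
          (∀ j ≤ d, j ≠ 0 → j ≠ m → j ≠ n → δ j = 0) ∧
          n - m - 1 ≤ m - 1 ∧ m - 1 ≤ d - n) := by
  obtain ⟨m, n, hm, hmn, hn, hδ⟩ := exists_eq_indicator_of_sum_eq_three h01 h0 hsum
  have hnd : n = d → m = 1 := fun hnd => by
    by_contra hm1
    rw [hδ d le_rfl, hδ 1 (by omega), if_pos (by omega), if_neg (by omega)] at h1
    omega
  rw [stanleyIneq_and_hibiIneq_iff_of_eq_indicator hδ hm hmn hn hnd,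
    support_pattern_iff_of_eq_indicator hδ hm hmn hn]

/-- Let `d ≥ 3` and let `(δ_0, …, δ_d)` be a `0/1` sequence with `δ_0 = 1`,
`δ_1 ≥ δ_d` and `Σ δ_i = 3`. The sequence satisfies Stanley's inequalities and the
inequalities (1.3) iff it equals `(1,1,1,0,…,0)`, or there are `1 < m < n < d` with
`δ_m = δ_n = 1`, all other entries `0`, and, with `p = m−1`, `q = n−m−1`, `r = d−n`,
one has `0 ≤ q ≤ p ≤ r`. -/
theorem zero_one_delta_sum_three_ineq_iff
    (d : ℕ) (hd : 3 ≤ d) (δ : ℕ → ℕ)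
    (h01 : ∀ i ≤ d, δ i ≤ 1)
    (h0 : δ 0 = 1) (h1 : δ d ≤ δ 1)
    (hsum : ∑ i ∈ Finset.range (d + 1), δ i = 3) :
    (StanleyIneq d δ ∧ HibiIneq d δ) ↔
      ((δ 1 = 1 ∧ δ 2 = 1 ∧ ∀ j ≤ d, j ≠ 0 → j ≠ 1 → j ≠ 2 → δ j = 0) ∨
        ∃ m n : ℕ, 1 < m ∧ m < n ∧ n < d ∧ δ m = 1 ∧ δ n = 1 ∧
          (∀ j ≤ d, j ≠ 0 → j ≠ m → j ≠ n → δ j = 0) ∧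
          n - m - 1 ≤ m - 1 ∧ m - 1 ≤ d - n) :=
  zero_one_delta_sum_three_ineq_iff_general d δ h01 h0 h1 hsum
end
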